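/- Let d ≥ 3. There exists a constant C' > 0, depending only on d and L, such that for every N ≥ 0 and every proper embedding 𝒯 ∈ Λ_N, with A = ∪_{m ∈ T_(N)} B(𝒯(m), 2L), the sum over all unordered pairs of distinct points u, v ∈ A of |u − v|^{2−d} is at most C' · 2^N. -/

import Mathlib

/-!
STATEMENT 6: Let `d ≥ 3`. There is a constant `C' > 0`, depending only on `d` and `L`,
such that for every `N ≥ 0` and every proper embedding `𝒯 ∈ Λ_N`, with
`A = ∪_{m ∈ T_(N)} B(𝒯(m), 2L)`, the sum over all unordered pairs of distinct points
`u, v ∈ A` of `|u − v|^(2−d)` is at most `C' · 2^N`.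

The sum over unordered pairs of distinct points equals half of the sum over ordered
pairs `(u,v) ∈ A × A` with `u ≠ v` (the summand is symmetric in `u, v`), which is how
it is expressed below; the (finite) sum is expressed with `finsum` (`∑ᶠ`), and
`|u − v|^(2−d)` is the real number `(normInf (u-v) : ℝ) ^ ((2 : ℤ) - d)`.
-/

/-- The `ℓ∞` norm of a point of `ℤ^d`, as a natural number. -/
def normInf {d : ℕ} (x : Fin d → ℤ) : ℕ := Finset.univ.sup fun i => (x i).natAbs

/-- The `ℓ∞`-ball `B(x, r)` in `ℤ^d`. -/
def box {d : ℕ} (x : Fin d → ℤ) (r : ℕ) : Set (Fin d → ℤ) := {y | normInf (y - x) ≤ r}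

/-- Proper embedding of the binary tree `T_N` of height `N` (scale parameter `L`). -/
def IsProperEmbedding (d L N : ℕ) (T : List Bool → (Fin d → ℤ)) : Prop :=
  T [] = 0 ∧
  (∀ m : List Bool, m.length ≤ N → ∀ i : Fin d,
      ((6 ^ (N - m.length) * L : ℕ) : ℤ) ∣ T m i) ∧
  ∀ m : List Bool, m.length < N →
    normInf (T (m ++ [false]) - T m) = 6 ^ (N - m.length) * L ∧
    normInf (T (m ++ [true]) - T m) = 2 * (6 ^ (N - m.length) * L)

/-- The union `A = ∪_{m ∈ T_(N)} B(𝒯(m), 2L)` over the leaves of `T_N`. -/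
def leafBoxes (d L N : ℕ) (T : List Bool → (Fin d → ℤ)) : Set (Fin d → ℤ) :=
  ⋃ m ∈ {m : List Bool | m.length = N}, box (T m) (2 * L)

/-!
Write `K = (4L + 1)^d` for the size of one box and `E_N` for the largest energy
`∑_{u ≠ v ∈ A} |u - v|^(2-d)` over proper embeddings of `T_N`. Removing the root of a proper
embedding of `T_{N+1}` leaves two proper embeddings of `T_N`, translated to the children
`𝒯(1)` and `𝒯(2)`, which lie at distances `L_{N+1}` and `2 L_{N+1}` from `0`. By induction every
leaf box of a proper embedding of `T_N` lies within `(2/5) L_{N+1}` of its root, so points of the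
two halves are at distance at least `L_{N+1} / 5`. As `|x|^(2-d) ≤ |x|⁻¹` and each half has at most
`2^N K` points, the cross pairs contribute at most `2 (2^N K)^2 · 5 / 6^(N+1) ≤ 2 K^2`, whence
`E_{N+1} ≤ 2 E_N + 2 K^2`, `E_0 ≤ K^2` and `E_N ≤ (3 · 2^N - 2) K^2`.
-/

open scoped Finset

section NormInf

variable {d : ℕ}

theorem normInf_eq_norm (x : Fin d → ℤ) : (normInf x : ℝ) = ‖x‖ := by
  rw [Pi.norm_def, normInf, ← NNReal.coe_natCast, Nat.cast_finsetSup]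
  simp_rw [NNReal.natCast_natAbs]

@[simp]
theorem normInf_zero : normInf (0 : Fin d → ℤ) = 0 := by
  simp [normInf]

theorem normInf_pos {x : Fin d → ℤ} (hx : x ≠ 0) : 0 < normInf x := by
  have := norm_pos_iff.2 hx
  rw [← normInf_eq_norm] at this
  exact_mod_cast this

theorem normInf_neg (x : Fin d → ℤ) : normInf (-x) = normInf x := by
  exact_mod_cast (normInf_eq_norm _).trans ((norm_neg x).trans (normInf_eq_norm x).symm)

theorem normInf_add_le (x y : Fin d → ℤ) : normInf (x + y) ≤ normInf x + normInf y := by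
  have := norm_add_le x y
  rw [← normInf_eq_norm, ← normInf_eq_norm, ← normInf_eq_norm] at this
  exact_mod_cast this

theorem normInf_sub_le (x y : Fin d → ℤ) : normInf (x - y) ≤ normInf x + normInf y := by
  have := norm_sub_le x y
  rw [← normInf_eq_norm, ← normInf_eq_norm, ← normInf_eq_norm] at this
  exact_mod_cast this

theorem box_eq_Icc (x : Fin d → ℤ) (r : ℕ) :
    box x r = Set.Icc (x - (r : Fin d → ℤ)) (x + r) := by
  ext y
  simp only [box, Set.mem_ofPred_eq, Set.mem_Icc, normInf, Finset.sup_le_iff, Finset.mem_univ,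
    true_implies, Pi.le_def, Pi.sub_apply, Pi.add_apply, Pi.natCast_apply, ← forall_and]
  exact forall_congr' fun i => by omega

theorem card_Icc_sub_add (x : Fin d → ℤ) (r : ℕ) :
    #(Finset.Icc (x - (r : Fin d → ℤ)) (x + r)) = (2 * r + 1) ^ d := by
  rw [Pi.card_Icc]
  simp only [Int.card_Icc, Pi.add_apply, Pi.sub_apply, Pi.natCast_apply]
  rw [Finset.prod_eq_pow_card (b := 2 * r + 1) fun i _ => by omega, Finset.card_univ,
    Fintype.card_fin]

end NormInf

section InvDistPow

variable {d : ℕ}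

noncomputable def invDistPow (d : ℕ) (x : Fin d → ℤ) : ℝ := (normInf x : ℝ) ^ ((2 : ℤ) - d)

theorem invDistPow_neg (x : Fin d → ℤ) : invDistPow d (-x) = invDistPow d x := by
  rw [invDistPow, invDistPow, normInf_neg]

theorem invDistPow_le_inv_normInf (hd : 3 ≤ d) {x : Fin d → ℤ} (hx : x ≠ 0) :
    invDistPow d x ≤ (normInf x : ℝ)⁻¹ := by
  have hx1 : (1 : ℝ) ≤ normInf x := by exact_mod_cast normInf_pos hx
  rw [invDistPow, ← zpow_neg_one]
  exact zpow_le_zpow_right₀ hx1 (by omega)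

theorem invDistPow_le_div_of_le_mul (hd : 3 ≤ d) {x : Fin d → ℤ} {a b : ℝ} (ha : 0 < a)
    (h : a ≤ b * normInf x) : invDistPow d x ≤ b / a := by
  have hx : 0 < normInf x := Nat.pos_of_ne_zero fun h0 => by
    rw [h0, Nat.cast_zero, mul_zero] at h
    linarith
  refine (invDistPow_le_inv_normInf hd fun h0 => by simp [h0] at hx).trans ?_
  rw [le_div_iff₀ ha, inv_mul_le_iff₀ (by exact_mod_cast hx)]
  linarith

theorem invDistPow_le_one (hd : 3 ≤ d) {x : Fin d → ℤ} (hx : x ≠ 0) : invDistPow d x ≤ 1 :=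
  (invDistPow_le_inv_normInf hd hx).trans (inv_le_one_of_one_le₀ (by exact_mod_cast normInf_pos hx))

end InvDistPow

section Energy

variable {G : Type*} [AddCommGroup G] {f : G → ℝ}

theorem sum_product_le_card_mul_card_mul {s t : Finset G} {M : ℝ}
    (hM : ∀ u ∈ s, ∀ v ∈ t, f (u - v) ≤ M) :
    ∑ p ∈ s ×ˢ t, f (p.1 - p.2) ≤ #s * #t * M := by
  have := Finset.sum_le_card_nsmul (s ×ˢ t) (fun p => f (p.1 - p.2)) M
    fun p hp => hM _ (Finset.mem_product.1 hp).1 _ (Finset.mem_product.1 hp).2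
  rwa [nsmul_eq_mul, Finset.card_product, Nat.cast_mul] at this

variable (f) in
noncomputable def energy (s : Finset G) : ℝ := ∑ p ∈ s.offDiag, f (p.1 - p.2)

theorem energy_le_card_mul_card_mul {s : Finset G} {M : ℝ} (hM0 : 0 ≤ M)
    (hM : ∀ x ≠ 0, f x ≤ M) : energy f s ≤ #s * #s * M := by
  have hcard : #s.offDiag ≤ #s * #s := s.offDiag_card ▸ Nat.sub_le _ _
  calc energy f s ≤ #s.offDiag * M := by
        refine (Finset.sum_le_card_nsmul _ _ _ fun p hp => ?_).trans_eq (nsmul_eq_mul _ _)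
        exact hM _ (sub_ne_zero.2 (Finset.mem_offDiag.1 hp).2.2)
    _ ≤ #s * #s * M := by gcongr; exact_mod_cast hcard

variable [DecidableEq G]

theorem energy_image_add_right (s : Finset G) (c : G) :
    energy f (s.image (· + c)) = energy f s := by
  refine (Finset.sum_nbij' (fun p => (p.1 + c, p.2 + c)) (fun p => (p.1 - c, p.2 - c))
    ?_ ?_ ?_ ?_ ?_).symm <;> simp [sub_eq_add_neg]

theorem energy_union_le {s t : Finset G} {M : ℝ} (hst : Disjoint s t)
    (heven : ∀ x, f (-x) = f x) (hM : ∀ u ∈ s, ∀ v ∈ t, f (u - v) ≤ M) :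
    energy f (s ∪ t) ≤ energy f s + energy f t + 2 * (#s * #t) * M := by
  have hM' : ∀ v ∈ t, ∀ u ∈ s, f (v - u) ≤ M := fun v hv u hu => by
    rw [← neg_sub, heven]; exact hM u hu v hv
  have hsplit : energy f (s ∪ t) = energy f s + energy f t + ∑ p ∈ s ×ˢ t, f (p.1 - p.2) +
      ∑ p ∈ t ×ˢ s, f (p.1 - p.2) := by
    rw [energy, Finset.offDiag_union hst, Finset.sum_union, Finset.sum_union, Finset.sum_union]
    · rfl
    all_goals rw [Finset.disjoint_left] at hst ⊢; grind
  have h₁ := sum_product_le_card_mul_card_mul hM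
  have h₂ := sum_product_le_card_mul_card_mul hM'
  rw [hsplit]
  linarith

end Energy

section Tree

variable {d L N : ℕ} {T : List Bool → (Fin d → ℤ)}

def subtree (T : List Bool → (Fin d → ℤ)) (b : Bool) : List Bool → (Fin d → ℤ) :=
  fun m => T (b :: m) - T [b]

theorem IsProperEmbedding.isProperEmbedding_subtree (hT : IsProperEmbedding d L (N + 1) T)
    (b : Bool) : IsProperEmbedding d L N (subtree T b) := by
  obtain ⟨-, hdvd, hstep⟩ := hT
  refine ⟨sub_self _, fun m hm i => ?_, fun m hm => ?_⟩
  · have hscale :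
        ((6 ^ (N - m.length) * L : ℕ) : ℤ) ∣ ((6 ^ (N + 1 - [b].length) * L : ℕ) : ℤ) := by
      exact_mod_cast Nat.mul_dvd_mul_right (pow_dvd_pow 6 (by simp)) L
    have hm' := hdvd (b :: m) (by simpa using hm) i
    rw [List.length_cons, Nat.add_sub_add_right] at hm'
    exact dvd_sub hm' (hscale.trans (hdvd [b] (by simp) i))
  · have hstep' := hstep (b :: m) (by simpa using hm)
    rw [List.length_cons, Nat.add_sub_add_right] at hstep'
    simpa [subtree, sub_sub_sub_cancel_right] using hstep'

theorem IsProperEmbedding.normInf_children (hT : IsProperEmbedding d L (N + 1) T) :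
    normInf (T [false]) = 6 ^ (N + 1) * L ∧ normInf (T [true]) = 2 * (6 ^ (N + 1) * L) := by
  simpa [hT.1] using hT.2.2 [] (by simp)

theorem mem_leafBoxes_succ {u : Fin d → ℤ} :
    u ∈ leafBoxes d L (N + 1) T ↔ ∃ b, u - T [b] ∈ leafBoxes d L N (subtree T b) := by
  simp only [leafBoxes, box, subtree, sub_sub_sub_cancel_right, Set.mem_iUnion,
    Set.mem_ofPred_eq, exists_prop]
  constructor
  · rintro ⟨_ | ⟨b, m⟩, hm, hu⟩
    · simp at hm
    · exact ⟨b, m, by simpa using hm, hu⟩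
  · rintro ⟨b, m, hm, hu⟩
    exact ⟨b :: m, by simpa using hm, hu⟩

variable (d L) in
noncomputable def leafBoxFinset : ℕ → (List Bool → (Fin d → ℤ)) → Finset (Fin d → ℤ)
  | 0, T => Finset.Icc (T [] - ((2 * L : ℕ) : Fin d → ℤ)) (T [] + ((2 * L : ℕ) : Fin d → ℤ))
  | N + 1, T => (leafBoxFinset N (subtree T false)).image (· + T [false]) ∪
      (leafBoxFinset N (subtree T true)).image (· + T [true])

theorem mem_leafBoxFinset_succ {u : Fin d → ℤ} :
    u ∈ leafBoxFinset d L (N + 1) T ↔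
      ∃ b, ∃ u' ∈ leafBoxFinset d L N (subtree T b), u' + T [b] = u := by
  simp only [leafBoxFinset, Finset.mem_union, Finset.mem_image, Bool.exists_bool]

theorem coe_leafBoxFinset (N : ℕ) (T : List Bool → (Fin d → ℤ)) :
    (leafBoxFinset d L N T : Set (Fin d → ℤ)) = leafBoxes d L N T := by
  induction N generalizing T with
  | zero => simp [leafBoxFinset, leafBoxes, box_eq_Icc]
  | succ N ih =>
    ext u
    rw [mem_leafBoxes_succ, Bool.exists_bool, ← ih, ← ih]
    simp [leafBoxFinset, sub_eq_add_neg]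

theorem card_leafBoxFinset_le (N : ℕ) (T : List Bool → (Fin d → ℤ)) :
    #(leafBoxFinset d L N T) ≤ 2 ^ N * (4 * L + 1) ^ d := by
  induction N generalizing T with
  | zero =>
    rw [leafBoxFinset, card_Icc_sub_add]
    exact le_of_eq (by ring)
  | succ N ih =>
    calc #(leafBoxFinset d L (N + 1) T)
        ≤ #(leafBoxFinset d L N (subtree T false)) + #(leafBoxFinset d L N (subtree T true)) :=
          (Finset.card_union_le _ _).trans (add_le_add Finset.card_image_le Finset.card_image_le)
      _ ≤ 2 ^ N * (4 * L + 1) ^ d + 2 ^ N * (4 * L + 1) ^ d := add_le_add (ih _) (ih _)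
      _ = 2 ^ (N + 1) * (4 * L + 1) ^ d := by ring

theorem IsProperEmbedding.five_mul_normInf_le (hT : IsProperEmbedding d L N T) {u : Fin d → ℤ}
    (hu : u ∈ leafBoxFinset d L N T) : 5 * normInf u ≤ 2 * (6 ^ (N + 1) * L) := by
  induction N generalizing T u with
  | zero =>
    have hbox : u ∈ box (T []) (2 * L) := by
      rw [box_eq_Icc]; exact_mod_cast Finset.mem_Icc.1 hu
    rw [box, Set.mem_ofPred_eq, hT.1, sub_zero] at hbox
    omega
  | succ N ih =>
    obtain ⟨b, u', hu', rfl⟩ := mem_leafBoxFinset_succ.1 hu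
    have hu'_le := ih (hT.isProperEmbedding_subtree b) hu'
    have hroot := hT.normInf_children
    have hchild : normInf (T [b]) ≤ 2 * (6 ^ (N + 1) * L) := by cases b <;> omega
    have hscale : 6 ^ (N + 1 + 1) * L = 6 * (6 ^ (N + 1) * L) := by ring
    have := normInf_add_le u' (T [b])
    omega

theorem IsProperEmbedding.le_five_mul_normInf_sub (hT : IsProperEmbedding d L (N + 1) T)
    {u v : Fin d → ℤ} (hu : u ∈ (leafBoxFinset d L N (subtree T false)).image (· + T [false]))
    (hv : v ∈ (leafBoxFinset d L N (subtree T true)).image (· + T [true])) :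
    6 ^ (N + 1) * L ≤ 5 * normInf (u - v) := by
  obtain ⟨u', hu', rfl⟩ := Finset.mem_image.1 hu
  obtain ⟨v', hv', rfl⟩ := Finset.mem_image.1 hv
  set w := u' + T [false] - (v' + T [true])
  have htri : normInf (T [true]) ≤ normInf (T [false]) + normInf u' + normInf v' + normInf w := by
    have h₁ := normInf_sub_le (T [false] + u' - v') w
    have h₂ := normInf_sub_le (T [false] + u') v'
    have h₃ := normInf_add_le (T [false]) u'
    rw [show T [false] + u' - v' - w = T [true] by simp only [w]; abel] at h₁
    omega
  have := (hT.isProperEmbedding_subtree false).five_mul_normInf_le hu'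
  have := (hT.isProperEmbedding_subtree true).five_mul_normInf_le hv'
  have := hT.normInf_children
  omega

theorem IsProperEmbedding.disjoint_image_leafBoxFinset (hL : 1 ≤ L)
    (hT : IsProperEmbedding d L (N + 1) T) :
    Disjoint ((leafBoxFinset d L N (subtree T false)).image (· + T [false]))
      ((leafBoxFinset d L N (subtree T true)).image (· + T [true])) :=
  Finset.disjoint_left.2 fun u hu hu' => by
    have := hT.le_five_mul_normInf_sub hu hu'
    rw [sub_self, normInf_zero] at this
    have : 0 < 6 ^ (N + 1) * L := by positivity
    omega

theorem energy_leafBoxFinset_zero_le (hd : 3 ≤ d) (T : List Bool → (Fin d → ℤ)) :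
    energy (invDistPow d) (leafBoxFinset d L 0 T) ≤ ((4 * L + 1 : ℝ) ^ d) ^ 2 := by
  have hcard : (#(leafBoxFinset d L 0 T) : ℝ) ≤ (4 * L + 1 : ℝ) ^ d := by
    exact_mod_cast (card_leafBoxFinset_le 0 T).trans_eq (one_mul _)
  calc energy (invDistPow d) (leafBoxFinset d L 0 T)
      ≤ #(leafBoxFinset d L 0 T) * #(leafBoxFinset d L 0 T) * 1 :=
        energy_le_card_mul_card_mul zero_le_one fun _ => invDistPow_le_one hd
    _ ≤ (4 * L + 1 : ℝ) ^ d * (4 * L + 1 : ℝ) ^ d * 1 := by gcongr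
    _ = ((4 * L + 1 : ℝ) ^ d) ^ 2 := by ring

theorem IsProperEmbedding.energy_leafBoxFinset_succ_le (hd : 3 ≤ d) (hL : 1 ≤ L)
    (hT : IsProperEmbedding d L (N + 1) T) :
    energy (invDistPow d) (leafBoxFinset d L (N + 1) T) ≤
      energy (invDistPow d) (leafBoxFinset d L N (subtree T false)) +
        energy (invDistPow d) (leafBoxFinset d L N (subtree T true)) +
          2 * ((4 * L + 1 : ℝ) ^ d) ^ 2 := by
  set K : ℝ := (4 * L + 1 : ℝ) ^ d
  set A : Bool → Finset (Fin d → ℤ) := fun b =>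
    (leafBoxFinset d L N (subtree T b)).image (· + T [b])
  have hcard : ∀ b, (#(A b) : ℝ) ≤ 2 ^ N * K := fun b => by
    have := (Finset.card_image_le (f := (· + T [b]))).trans
      (card_leafBoxFinset_le (L := L) N (subtree T b))
    simp only [K]
    exact_mod_cast this
  have hgrowth : (2 : ℝ) ^ N * 2 ^ N * 5 / 6 ^ (N + 1) ≤ 1 := by
    rw [div_le_one (by positivity), ← mul_pow, pow_succ]
    gcongr <;> norm_num
  calc energy (invDistPow d) (leafBoxFinset d L (N + 1) T)
      ≤ energy (invDistPow d) (A false) + energy (invDistPow d) (A true) +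
          2 * (#(A false) * #(A true)) * (5 / 6 ^ (N + 1)) :=
        energy_union_le (hT.disjoint_image_leafBoxFinset hL) invDistPow_neg fun u hu v hv =>
          invDistPow_le_div_of_le_mul hd (by positivity) <| by
            exact_mod_cast (Nat.le_mul_of_pos_right _ hL).trans (hT.le_five_mul_normInf_sub hu hv)
    _ ≤ energy (invDistPow d) (A false) + energy (invDistPow d) (A true) +
          2 * ((2 ^ N * K) * (2 ^ N * K)) * (5 / 6 ^ (N + 1)) := by
        gcongr <;> exact hcard _
    _ = energy (invDistPow d) (A false) + energy (invDistPow d) (A true) +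
          2 * K ^ 2 * ((2 : ℝ) ^ N * 2 ^ N * 5 / 6 ^ (N + 1)) := by ring
    _ ≤ energy (invDistPow d) (A false) + energy (invDistPow d) (A true) + 2 * K ^ 2 * 1 := by
        gcongr
    _ = _ := by simp only [A, energy_image_add_right, mul_one]

theorem IsProperEmbedding.energy_leafBoxFinset_le (hd : 3 ≤ d) (hL : 1 ≤ L)
    (hT : IsProperEmbedding d L N T) :
    energy (invDistPow d) (leafBoxFinset d L N T) ≤
      (3 * 2 ^ N - 2) * ((4 * L + 1 : ℝ) ^ d) ^ 2 := by
  induction N generalizing T with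
  | zero =>
    rw [pow_zero]
    linarith [energy_leafBoxFinset_zero_le (L := L) hd T]
  | succ N ih =>
    have h₀ := ih (hT.isProperEmbedding_subtree false)
    have h₁ := ih (hT.isProperEmbedding_subtree true)
    have := hT.energy_leafBoxFinset_succ_le hd hL
    rw [pow_succ]
    linarith

end Tree

theorem sum_pairs_inv_dist_pow_le (d : ℕ) (hd : 3 ≤ d) (L : ℕ) (hL : 1 ≤ L) :
    ∃ C : ℝ, 0 < C ∧
      ∀ (N : ℕ) (T : List Bool → (Fin d → ℤ)), IsProperEmbedding d L N T →
        (1 / 2 : ℝ) *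
          (∑ᶠ p ∈ {p : (Fin d → ℤ) × (Fin d → ℤ) |
              p.1 ∈ leafBoxes d L N T ∧ p.2 ∈ leafBoxes d L N T ∧ p.1 ≠ p.2},
            (normInf (p.1 - p.2) : ℝ) ^ ((2 : ℤ) - (d : ℤ))) ≤ C * 2 ^ N := by
  refine ⟨3 / 2 * ((4 * L + 1 : ℝ) ^ d) ^ 2, by positivity, fun N T hT => ?_⟩
  have hsum : ∑ᶠ p ∈ (leafBoxes d L N T).offDiag, invDistPow d (p.1 - p.2) =
      energy (invDistPow d) (leafBoxFinset d L N T) := by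
    rw [← coe_leafBoxFinset, ← Finset.coe_offDiag, finsum_mem_coe_finset]
    rfl
  have hE := hT.energy_leafBoxFinset_le hd hL
  change (1 / 2 : ℝ) * ∑ᶠ p ∈ (leafBoxes d L N T).offDiag, invDistPow d (p.1 - p.2) ≤ _
  rw [hsum]
  nlinarith [sq_nonneg ((4 * L + 1 : ℝ) ^ d)]
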